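/- The group Γ₀(4) (matrices in SL₂(ℤ) with lower-left entry divisible by 4) is generated by the matrices [[1,1],[0,1]], [[1,0],[4,1]], and -I. -/

import Mathlib

open Matrix MatrixGroups

/-!
Write `g = [[a, b], [c, d]] ∈ Γ₀(4)` and descend on `|c|`. Left multiplication by `T ^ n` replaces
`a` by `a + n c`, and left multiplication by `[[1, 0], [4, 1]] ^ k` replaces `c = 4 m` by
`4 (m + k a)`. As `ad - bc = 1` with `c` even, `a` is odd; so after choosing `n` with
`2 |a + n c| ≤ |c|`, rounding `m` modulo the odd number `a + n c` gives `k` with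
`2 |m + k (a + n c)| < |a + n c|`, hence a new lower-left entry of absolute value `< |c|`.
When `c = 0`, `g = ± T ^ b`.
-/

theorem Int.exists_two_mul_add_mul_mem_Ico (a : ℤ) {c : ℤ} (hc : c ≠ 0) :
    ∃ n : ℤ, 2 * (a + n * c) ∈ Set.Ico (-|c|) |c| := by
  set q := (2 * a + |c|) / (2 * |c|)
  have hpos : 0 < 2 * |c| := by positivity
  have hdiv := Int.mul_ediv_add_emod (2 * a + |c|) (2 * |c|)
  have hlo := Int.emod_nonneg (2 * a + |c|) hpos.ne'
  have hhi := Int.emod_lt_of_pos (2 * a + |c|) hpos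
  refine ⟨-q * c.sign, ?_⟩
  rw [mul_assoc, Int.sign_mul_self_eq_abs]
  constructor <;> linarith

theorem Int.exists_two_mul_abs_add_mul_lt_of_odd (a : ℤ) {c : ℤ} (hc : Odd c) :
    ∃ n : ℤ, 2 * |a + n * c| < |c| := by
  obtain ⟨n, hlo, hhi⟩ := a.exists_two_mul_add_mul_mem_Ico (c := c) (by rintro rfl; simp at hc)
  have hne : -|c| ≠ 2 * (a + n * c) := fun h => by
    have : Odd (-|c|) := by rwa [odd_neg, odd_abs]
    exact Int.not_even_iff_odd.mpr (h ▸ this) (even_two_mul _)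
  refine ⟨n, ?_⟩
  rw [← abs_two, ← abs_mul]
  exact abs_lt.mpr ⟨lt_of_le_of_ne hlo hne, hhi⟩

namespace Matrix.SpecialLinearGroup

variable {ι F : Type*} [DecidableEq ι] [Fintype ι] [CommRing F]

theorem transvection_zsmul {i j : ι} (hij : i ≠ j) (b : F) (k : ℤ) :
    transvection hij (k • b) = transvection hij b ^ k := by
  induction k using Int.induction_on with
  | zero => simp [transvection_coeff_zero]
  | succ k ih => rw [add_smul, one_smul, transvection_add, ih, _root_.zpow_add_one]
  | pred k ih =>
    rw [sub_smul, one_smul, sub_eq_add_neg, transvection_add, ih, ← transvection_inv,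
      _root_.zpow_sub_one]

variable {R : Type*} [CommRing R]

theorem transvection_zero_one_mul_apply_zero_zero (b : R) (g : SL(2, R)) :
    (transvection (zero_ne_one' (Fin 2)) b * g) 0 0 = g 0 0 + b * g 1 0 := by
  simp [transvection_coe, Matrix.add_mul]

theorem transvection_zero_one_mul_apply_one_zero (b : R) (g : SL(2, R)) :
    (transvection (zero_ne_one' (Fin 2)) b * g) 1 0 = g 1 0 := by
  simp [transvection_coe, Matrix.add_mul]

theorem transvection_one_zero_mul_apply_one_zero (b : R) (g : SL(2, R)) :
    (transvection (one_ne_zero' (Fin 2)) b * g) 1 0 = g 1 0 + b * g 0 0 := by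
  simp [transvection_coe, Matrix.add_mul]

theorem eq_transvection_of_apply_one_zero_eq_zero {g : SL(2, R)} (h10 : g 1 0 = 0)
    (h00 : g 0 0 = 1) : g = transvection (zero_ne_one' (Fin 2)) (g 0 1) := by
  have h11 : g 1 1 = 1 := by
    have hdet := g.det_coe
    rw [det_fin_two, h10, h00] at hdet
    simpa using hdet
  ext i j
  fin_cases i <;> fin_cases j <;> simp [transvection_coe, h10, h00, h11]

theorem odd_apply_zero_zero_of_even_apply_one_zero {g : SL(2, ℤ)} (h : Even (g 1 0)) :
    Odd (g 0 0) := by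
  have hdet := g.det_coe
  rw [det_fin_two] at hdet
  have hodd : Odd (g 0 0 * g 1 1) := by
    rw [show g 0 0 * g 1 1 = g 0 1 * g 1 0 + 1 by linarith]
    exact (h.mul_left _).add_one
  exact (Int.odd_mul.mp hodd).1

theorem mem_of_apply_one_zero_eq_zero {H : Subgroup SL(2, ℤ)}
    (hU : ∀ b : ℤ, transvection (zero_ne_one' (Fin 2)) b ∈ H) (hneg : -1 ∈ H) {g : SL(2, ℤ)}
    (h : g 1 0 = 0) : g ∈ H := by
  have hdet := g.det_coe
  rw [det_fin_two, h, mul_zero, sub_zero] at hdet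
  rcases Int.eq_one_or_neg_one_of_mul_eq_one hdet with h1 | h1
  · rw [eq_transvection_of_apply_one_zero_eq_zero h h1]
    exact hU _
  · have hneg_g : -g = transvection (zero_ne_one' (Fin 2)) (-g 0 1) := by
      simpa using eq_transvection_of_apply_one_zero_eq_zero (g := -g) (by simp [h]) (by simp [h1])
    rw [← neg_neg g, hneg_g, ← neg_one_mul]
    exact H.mul_mem hneg (hU _)

end Matrix.SpecialLinearGroup

namespace CongruenceSubgroup

open Matrix.SpecialLinearGroup

theorem transvection_zero_one_mem_Gamma0 (N : ℕ) (b : ℤ) :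
    transvection (zero_ne_one' (Fin 2)) b ∈ Gamma0 N := by
  simp [transvection_coe]

theorem transvection_one_zero_mem_Gamma0 (N : ℕ) (k : ℤ) :
    transvection (one_ne_zero' (Fin 2)) (k * N) ∈ Gamma0 N := by
  simp [transvection_coe]

theorem neg_one_mem_Gamma0 (N : ℕ) : -1 ∈ Gamma0 N := by
  simp

theorem exists_natAbs_transvection_mul_apply_one_zero_lt {g : SL(2, ℤ)} (hg : g ∈ Gamma0 4)
    (hc : g 1 0 ≠ 0) :
    ∃ n k : ℤ, ((transvection (one_ne_zero' (Fin 2)) (k * 4) *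
      (transvection (zero_ne_one' (Fin 2)) n * g)) 1 0).natAbs < (g 1 0).natAbs := by
  obtain ⟨m, hm⟩ : (4 : ℤ) ∣ g 1 0 := (ZMod.intCast_zmod_eq_zero_iff_dvd _ 4).mp hg
  obtain ⟨n, hlo, hhi⟩ := (g 0 0).exists_two_mul_add_mul_mem_Ico hc
  have ha : Odd (g 0 0 + n * g 1 0) := by
    have hc_even : Even (g 1 0) := ⟨2 * m, by rw [hm]; ring⟩
    exact (odd_apply_zero_zero_of_even_apply_one_zero hc_even).add_even (hc_even.mul_left n)
  obtain ⟨k, hk⟩ := m.exists_two_mul_abs_add_mul_lt_of_odd ha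
  refine ⟨n, k, ?_⟩
  rw [transvection_one_zero_mul_apply_one_zero, transvection_zero_one_mul_apply_zero_zero,
    transvection_zero_one_mul_apply_one_zero]
  zify
  have h2a : 2 * |g 0 0 + n * g 1 0| ≤ |g 1 0| := by
    rw [← abs_two, ← abs_mul]; exact abs_le.mpr ⟨hlo, hhi.le⟩
  calc |g 1 0 + k * 4 * (g 0 0 + n * g 1 0)| = 4 * |m + k * (g 0 0 + n * g 1 0)| := by
        rw [show g 1 0 + k * 4 * (g 0 0 + n * g 1 0) = 4 * (m + k * (g 0 0 + n * g 1 0)) by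
          linear_combination hm, abs_mul, abs_of_pos four_pos]
    _ < 2 * |g 0 0 + n * g 1 0| := by linarith
    _ ≤ |g 1 0| := h2a

theorem Gamma0_four_le {H : Subgroup SL(2, ℤ)} (hU : transvection (zero_ne_one' (Fin 2)) 1 ∈ H)
    (hL : transvection (one_ne_zero' (Fin 2)) 4 ∈ H) (hneg : -1 ∈ H) : Gamma0 4 ≤ H := by
  have hU' (n : ℤ) : transvection (zero_ne_one' (Fin 2)) n ∈ H := by
    simpa [← transvection_zsmul] using H.zpow_mem hU n
  have hL' (k : ℤ) : transvection (one_ne_zero' (Fin 2)) (k * 4) ∈ H := by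
    simpa [← transvection_zsmul] using H.zpow_mem hL k
  intro g hg
  induction hc : (g 1 0).natAbs using Nat.strong_induction_on generalizing g with
  | _ c ih =>
  by_cases hc0 : g 1 0 = 0
  · exact mem_of_apply_one_zero_eq_zero hU' hneg hc0
  obtain ⟨n, k, hlt⟩ := exists_natAbs_transvection_mul_apply_one_zero_lt hg hc0
  have hg' := ih _ (hc ▸ hlt) ((Gamma0 4).mul_mem (transvection_one_zero_mem_Gamma0 4 k)
    ((Gamma0 4).mul_mem (transvection_zero_one_mem_Gamma0 4 n) hg)) rfl
  rw [← inv_mul_cancel_left (transvection (zero_ne_one' (Fin 2)) n) g,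
    ← inv_mul_cancel_left (transvection (one_ne_zero' (Fin 2)) (k * 4))
      (transvection (zero_ne_one' (Fin 2)) n * g)]
  exact H.mul_mem (H.inv_mem (hU' n)) (H.mul_mem (H.inv_mem (hL' k)) hg')

theorem closure_transvections_neg_one_eq_Gamma0_four :
    Subgroup.closure {transvection (zero_ne_one' (Fin 2)) 1,
      transvection (one_ne_zero' (Fin 2)) 4, (-1 : SL(2, ℤ))} = Gamma0 4 := by
  refine le_antisymm ((Subgroup.closure_le _).mpr ?_)
    (Gamma0_four_le (Subgroup.subset_closure (by simp)) (Subgroup.subset_closure (by simp))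
      (Subgroup.subset_closure (by simp)))
  rintro _ (rfl | rfl | rfl)
  · exact transvection_zero_one_mem_Gamma0 4 1
  · simpa using transvection_one_zero_mem_Gamma0 4 1
  · exact neg_one_mem_Gamma0 4

end CongruenceSubgroup

theorem Gamma0_four_eq_closure :
    Subgroup.closure
      ({(⟨!![1, 1; 0, 1], by simp [Matrix.det_fin_two_of]⟩ : SL(2, ℤ)),
        (⟨!![1, 0; 4, 1], by simp [Matrix.det_fin_two_of]⟩ : SL(2, ℤ)),
        (⟨!![-1, 0; 0, -1], by simp [Matrix.det_fin_two_of]⟩ : SL(2, ℤ))} :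
        Set SL(2, ℤ)) = CongruenceSubgroup.Gamma0 4 := by
  convert CongruenceSubgroup.closure_transvections_neg_one_eq_Gamma0_four using 2
  refine congrArg₂ _ ?_ (congrArg₂ _ ?_ (congrArg _ ?_)) <;>
    ext i j <;> fin_cases i <;> fin_cases j <;> rfl
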